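/- Fix s>0, N∈ℕ with N≥1, and c∈ℝ^N with |c_i|<1 for all i. Then Φ_N satisfies the recursion Φ_N(c_1,…,c_N) = (1/B(2sN,2s)) ∫_0^1 (1−t c_1)^{−2s} t^{2sN−1} (1−t)^{2s−1} Φ_{N−1}(t c_2,…,t c_N) dt, where B(a,b)=Γ(a)Γ(b)/Γ(a+b) is the Beta function and Φ_0 is by convention the constant function 1. -/

import Mathlib

/-! Write `a = 2s`. Expanding `(1 - t c₀)^(-a)` by the binomial series and `Φ_N(t c')` by its
defining series (each term is homogeneous of degree `|η|` in `t`), the integrand becomes a series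
indexed by `ζ = (k, η) ∈ ℕ^{N+1}` whose terms are multiples of
`t^(a(N+1) + |ζ| - 1) (1 - t)^(a - 1)`. The Beta integral turns each of them into
`Γ(a) · Γ(a(N+1) + |ζ|) / Γ(a(N+2) + |ζ|)`, which is precisely the missing `i = 0` factor of the
term of `Φ_{N+1}(c)` indexed by `ζ`. Termwise integration is justified by absolute convergence: the
`Γ`-ratios decrease in `|ζ|`, so the series is dominated by a product of binomial series. -/

/-- `𝒩_i^+(η) = Σ_{k=i}^{N} η_k` (0-based indexing: the sum of `η k` over `k ≥ i`). -/
def Nplus {N : ℕ} (η : Fin N → ℕ) (i : Fin N) : ℕ :=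
  ∑ k : Fin N, if i ≤ k then η k else 0

/-- `Φ_N(c) = (Γ(2s(N+1))/Γ(2s)) · Σ_{η∈ℕ^N} ∏_{i=1}^{N} [ c_i^{η_i} · Γ(η_i+2s)/(Γ(2s)·η_i!) ·
Γ(2s(N+1−i)+𝒩_i^+(η))/Γ(2s(N+2−i)+𝒩_i^+(η)) ]` (here `i : Fin N` is 0-based, so the paper's
`N+1−i` and `N+2−i` become `N−i` and `N+1−i`). -/
noncomputable def PhiFun (s : ℝ) {N : ℕ} (c : Fin N → ℝ) : ℝ :=
  (Real.Gamma (2 * s * ((N : ℝ) + 1)) / Real.Gamma (2 * s)) *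
    ∑' η : Fin N → ℕ, ∏ i : Fin N,
      (c i ^ η i * (Real.Gamma ((η i : ℝ) + 2 * s) / (Real.Gamma (2 * s) * ((η i).factorial : ℝ)))
        * (Real.Gamma (2 * s * ((N : ℝ) - (i : ℕ)) + (Nplus η i : ℝ)) /
            Real.Gamma (2 * s * ((N : ℝ) + 1 - (i : ℕ)) + (Nplus η i : ℝ))))

open Real Set MeasureTheory
open scoped Nat

theorem Real.Gamma_add_nat_eq_mul_ascPochhammer {a : ℝ} (ha : 0 < a) (n : ℕ) :
    Gamma (a + n) = Gamma a * (ascPochhammer ℝ n).eval a := by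
  induction n with
  | zero => simp
  | succ n ih =>
    rw [Nat.cast_succ, ← add_assoc, Gamma_add_one (by positivity), ih, ascPochhammer_succ_right]
    simp only [Polynomial.eval_mul, Polynomial.eval_add, Polynomial.eval_X,
      Polynomial.eval_natCast]
    ring

section NegBinomial

variable {a : ℝ}

/-- The coefficients `(a)ₖ / k!` of `(1 - x)^(-a)`. -/
noncomputable def negBinomCoeff (a : ℝ) (k : ℕ) : ℝ :=
  Gamma (k + a) / (Gamma a * k !)

lemma negBinomCoeff_pos (ha : 0 < a) (k : ℕ) : 0 < negBinomCoeff a k :=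
  div_pos (Gamma_pos_of_pos (by positivity)) (mul_pos (Gamma_pos_of_pos ha) (by positivity))

lemma negBinomCoeff_eq_choose (ha : 0 < a) (k : ℕ) :
    negBinomCoeff a k = Ring.choose (a + k - 1) k := by
  rw [Ring.choose_eq_smul, Polynomial.descPochhammer_smeval_eq_ascPochhammer,
    Polynomial.ascPochhammer_smeval_eq_eval, smul_eq_mul, negBinomCoeff, add_comm (k : ℝ),
    Gamma_add_nat_eq_mul_ascPochhammer ha, show a + k - 1 - k + 1 = a by ring]
  field_simp [(Gamma_pos_of_pos ha).ne']

theorem hasSum_negBinomCoeff_mul_pow (ha : 0 < a) {x : ℝ} (hx : |x| < 1) :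
    HasSum (fun k => negBinomCoeff a k * x ^ k) ((1 - x) ^ (-a)) := by
  have h := (one_div_one_sub_rpow_hasFPowerSeriesOnBall_zero a).hasSum (y := x)
    (by simpa [enorm_eq_nnnorm, ← NNReal.coe_lt_coe] using hx)
  simp only [FormalMultilinearSeries.ofScalars_apply_eq, smul_eq_mul, zero_add, one_div] at h
  rw [rpow_neg (by linarith [abs_lt.mp hx])]
  simpa only [negBinomCoeff_eq_choose ha, mul_comm] using h

lemma summable_norm_negBinomCoeff_mul_pow (ha : 0 < a) {x : ℝ} (hx : |x| < 1) :
    Summable (fun k => ‖negBinomCoeff a k * x ^ k‖) := by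
  simpa only [norm_mul, norm_pow, Real.norm_eq_abs, abs_of_pos (negBinomCoeff_pos ha _)] using
    (hasSum_negBinomCoeff_mul_pow ha (x := |x|) (by rwa [abs_abs])).summable

end NegBinomial

section Beta

variable {p q : ℝ}

lemma ofReal_betaIntegrand {t : ℝ} (ht : t ∈ Icc (0 : ℝ) 1) :
    ((t ^ (p - 1) * (1 - t) ^ (q - 1) : ℝ) : ℂ)
      = (t : ℂ) ^ ((p : ℂ) - 1) * (1 - (t : ℂ)) ^ ((q : ℂ) - 1) := by
  rw [Complex.ofReal_mul, Complex.ofReal_cpow ht.1, Complex.ofReal_cpow (sub_nonneg.2 ht.2)]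
  push_cast
  ring

lemma intervalIntegrable_betaIntegrand (hp : 0 < p) (hq : 0 < q) :
    IntervalIntegrable (fun t : ℝ => t ^ (p - 1) * (1 - t) ^ (q - 1)) volume 0 1 := by
  refine (Complex.betaIntegral_convergent (u := p) (v := q) (by simpa) (by simpa)).norm.congr_uIoo
    fun t ht => ?_
  rw [uIoo_of_le zero_le_one] at ht
  dsimp only
  rw [← ofReal_betaIntegrand (Ioo_subset_Icc_self ht), Complex.norm_real, Real.norm_of_nonneg]
  exact mul_nonneg (rpow_nonneg ht.1.le _) (rpow_nonneg (by linarith [ht.2]) _)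

lemma integral_betaIntegrand (hp : 0 < p) (hq : 0 < q) :
    ∫ t in (0 : ℝ)..1, t ^ (p - 1) * (1 - t) ^ (q - 1) = Gamma p * Gamma q / Gamma (p + q) := by
  have h := Complex.Gamma_mul_Gamma_eq_betaIntegral (s := p) (t := q) (by simpa) (by simpa)
  rw [Complex.betaIntegral, ← intervalIntegral.integral_congr (fun t ht => ofReal_betaIntegrand
    (by rwa [uIcc_of_le zero_le_one] at ht)), intervalIntegral.integral_ofReal,
    ← Complex.ofReal_add, Complex.Gamma_ofReal, Complex.Gamma_ofReal, Complex.Gamma_ofReal] at h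
  rw [eq_div_iff (Gamma_pos_of_pos (by positivity)).ne']
  exact_mod_cast (mul_comm _ _).trans h.symm

end Beta

section GammaRatio

variable {a r : ℝ}

noncomputable def gammaRatio (a r : ℝ) (m : ℕ) : ℝ :=
  Gamma (r + m) / Gamma (r + a + m)

lemma gammaRatio_pos (ha : 0 ≤ a) (hr : 0 < r) (m : ℕ) : 0 < gammaRatio a r m :=
  div_pos (Gamma_pos_of_pos (by positivity)) (Gamma_pos_of_pos (by positivity))

lemma gammaRatio_succ (ha : 0 ≤ a) (hr : 0 < r) (m : ℕ) :
    gammaRatio a r (m + 1) = (r + m) / (r + a + m) * gammaRatio a r m := by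
  simp only [gammaRatio, Nat.cast_succ, ← add_assoc]
  rw [Gamma_add_one (by positivity), Gamma_add_one (by positivity), mul_div_mul_comm]

lemma gammaRatio_antitone (ha : 0 ≤ a) (hr : 0 < r) : Antitone (gammaRatio a r) := by
  refine antitone_nat_of_succ_le fun m => ?_
  rw [gammaRatio_succ ha hr]
  refine mul_le_of_le_one_left (gammaRatio_pos ha hr m).le ?_
  exact div_le_one_of_le₀ (by linarith) (by positivity)

lemma integral_rpow_mul_one_sub_rpow_eq_gammaRatio (ha : 0 < a) (hr : 0 < r) (m : ℕ) :
    ∫ t in (0 : ℝ)..1, t ^ (r + m - 1) * (1 - t) ^ (a - 1) = Gamma a * gammaRatio a r m := by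
  rw [integral_betaIntegrand (by positivity) ha, gammaRatio, add_right_comm r a]
  ring

end GammaRatio

lemma summable_pi_prod_of_nonneg {ι : Type*} :
    ∀ {N : ℕ} (f : Fin N → ι → ℝ), (∀ i, 0 ≤ f i) → (∀ i, Summable (f i)) →
      Summable (fun η : Fin N → ι => ∏ i, f i (η i))
  | 0, _, _, _ => .of_finite
  | _ + 1, f, hf0, hf => by
    have hprod := (hf 0).mul_of_nonneg
      (summable_pi_prod_of_nonneg (fun i => f i.succ) (fun i => hf0 i.succ) (fun i => hf i.succ))
      (hf0 0) (fun η => Finset.prod_nonneg fun i _ => hf0 i.succ (η i))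
    refine (Fin.consEquiv fun _ => ι).summable_iff.mp (hprod.congr fun z => ?_)
    simp [Fin.prod_univ_succ]

section PhiTerm

variable {a : ℝ} {N : ℕ}

noncomputable def phiTerm (a : ℝ) {N : ℕ} (c : Fin N → ℝ) (η : Fin N → ℕ) : ℝ :=
  ∏ i, c i ^ η i * negBinomCoeff a (η i) * gammaRatio a (a * (N - i)) (Nplus η i)

lemma PhiFun_eq_tsum_phiTerm (s : ℝ) (c : Fin N → ℝ) :
    PhiFun s c = Gamma (2 * s * (N + 1)) / Gamma (2 * s) * ∑' η, phiTerm (2 * s) c η := by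
  unfold PhiFun phiTerm negBinomCoeff gammaRatio
  congr 1
  refine tsum_congr fun η => Finset.prod_congr rfl fun i _ => ?_
  rw [show 2 * s * ((N : ℝ) + 1 - i) + Nplus η i = 2 * s * (N - i) + 2 * s + Nplus η i by ring,
    mul_assoc]

lemma mul_natCast_sub_val_pos (ha : 0 < a) (i : Fin N) : 0 < a * (N - i) :=
  mul_pos ha (sub_pos.2 (by exact_mod_cast i.isLt))

lemma phiTerm_const_mul (t : ℝ) (c : Fin N → ℝ) (η : Fin N → ℕ) :
    phiTerm a (fun i => t * c i) η = t ^ (∑ i, η i) * phiTerm a c η := by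
  simp only [phiTerm, mul_pow, ← Finset.prod_pow_eq_pow_sum, ← Finset.prod_mul_distrib, mul_assoc]

lemma abs_phiTerm (ha : 0 < a) (c : Fin N → ℝ) (η : Fin N → ℕ) :
    |phiTerm a c η| = phiTerm a (fun i => |c i|) η := by
  simp only [phiTerm, Finset.abs_prod, abs_mul, abs_pow, abs_of_pos (negBinomCoeff_pos ha _),
    abs_of_pos (gammaRatio_pos ha.le (mul_natCast_sub_val_pos ha _) _)]

lemma summable_norm_phiTerm (ha : 0 < a) {c : Fin N → ℝ} (hc : ∀ i, |c i| < 1) :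
    Summable (fun η => ‖phiTerm a c η‖) := by
  refine .of_nonneg_of_le (fun η => norm_nonneg _) (fun η => ?_) <| summable_pi_prod_of_nonneg
    (fun i k => ‖negBinomCoeff a k * c i ^ k‖ * gammaRatio a (a * (N - i)) 0)
    (fun i k => mul_nonneg (norm_nonneg _)
      (gammaRatio_pos ha.le (mul_natCast_sub_val_pos ha i) 0).le)
    (fun i => (summable_norm_negBinomCoeff_mul_pow ha (hc i)).mul_right _)
  rw [Real.norm_eq_abs, abs_phiTerm ha, phiTerm]
  refine Finset.prod_le_prod (fun i _ => ?_) (fun i _ => ?_)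
  · have := negBinomCoeff_pos ha (η i)
    have := gammaRatio_pos ha.le (mul_natCast_sub_val_pos ha i) (Nplus η i)
    positivity
  · rw [norm_mul, norm_pow, Real.norm_eq_abs, Real.norm_eq_abs, abs_of_pos (negBinomCoeff_pos ha _),
      mul_comm (negBinomCoeff a _)]
    exact mul_le_mul_of_nonneg_left
      (gammaRatio_antitone ha.le (mul_natCast_sub_val_pos ha i) (Nat.zero_le _))
      (by have := negBinomCoeff_pos ha (η i); positivity)

lemma Nplus_zero (η : Fin (N + 1) → ℕ) : Nplus η 0 = ∑ i, η i := by
  simp [Nplus]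

lemma Nplus_succ (η : Fin (N + 1) → ℕ) (i : Fin N) : Nplus η i.succ = Nplus (Fin.tail η) i := by
  simp [Nplus, Fin.sum_univ_succ, Fin.tail, Fin.succ_le_succ_iff]

lemma phiTerm_eq_mul_phiTerm_tail (c : Fin (N + 1) → ℝ) (η : Fin (N + 1) → ℕ) :
    phiTerm a c η = c 0 ^ η 0 * negBinomCoeff a (η 0) * gammaRatio a (a * (N + 1)) (∑ i, η i)
      * phiTerm a (fun i => c i.succ) (Fin.tail η) := by
  rw [phiTerm, phiTerm, Fin.prod_univ_succ, Nplus_zero]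
  congr 1
  · simp
  · refine Finset.prod_congr rfl fun i _ => ?_
    simp only [Nplus_succ, Fin.val_succ, Fin.tail]
    push_cast
    ring_nf

end PhiTerm

section Recursion

variable {a : ℝ} {N : ℕ}

noncomputable def consTerm (a x : ℝ) {N : ℕ} (d : Fin N → ℝ) (ζ : Fin (N + 1) → ℕ) : ℝ :=
  negBinomCoeff a (ζ 0) * x ^ ζ 0 * phiTerm a d (Fin.tail ζ)

lemma hasSum_consTerm (ha : 0 < a) {x : ℝ} (hx : |x| < 1) {d : Fin N → ℝ}
    (hd : ∀ i, |d i| < 1) :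
    HasSum (consTerm a x d) ((1 - x) ^ (-a) * ∑' η, phiTerm a d η) := by
  have hcons : consTerm a x d ∘ Fin.consEquiv (fun _ => ℕ)
      = fun z => negBinomCoeff a z.1 * x ^ z.1 * phiTerm a d z.2 := by
    funext z
    simp [consTerm, Fin.consEquiv]
  have hphi := summable_norm_phiTerm ha hd
  rw [← (Fin.consEquiv fun _ => ℕ).hasSum_iff, hcons]
  exact (hasSum_negBinomCoeff_mul_pow ha hx).mul hphi.of_norm.hasSum
    (summable_mul_of_summable_norm (summable_norm_negBinomCoeff_mul_pow ha hx) hphi)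

lemma abs_consTerm (ha : 0 < a) (x : ℝ) (d : Fin N → ℝ) (ζ : Fin (N + 1) → ℕ) :
    |consTerm a x d ζ| = consTerm a |x| (fun i => |d i|) ζ := by
  rw [consTerm, consTerm, abs_mul, abs_mul, abs_pow, abs_phiTerm ha,
    abs_of_pos (negBinomCoeff_pos ha _)]

lemma weight_mul_consTerm {t : ℝ} (ht : 0 < t) (p : ℝ) (c : Fin (N + 1) → ℝ)
    (ζ : Fin (N + 1) → ℕ) :
    t ^ (p - 1) * (1 - t) ^ (a - 1) * consTerm a (t * c 0) (fun i => t * c i.succ) ζ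
      = c 0 ^ ζ 0 * negBinomCoeff a (ζ 0) * phiTerm a (fun i => c i.succ) (Fin.tail ζ)
          * (t ^ (p + (∑ i, ζ i : ℕ) - 1) * (1 - t) ^ (a - 1)) := by
  rw [consTerm, phiTerm_const_mul, Fin.sum_univ_succ,
    show p + ((ζ 0 + ∑ i : Fin N, ζ i.succ : ℕ) : ℝ) - 1
      = p - 1 + ((ζ 0 + ∑ i : Fin N, ζ i.succ : ℕ) : ℝ) by ring,
    rpow_add ht, rpow_natCast, pow_add]
  simp only [Fin.tail, mul_pow]
  ring

lemma integrableOn_weight_mul_consTerm (ha : 0 < a) (c : Fin (N + 1) → ℝ)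
    (ζ : Fin (N + 1) → ℕ) :
    IntegrableOn (fun t => t ^ (a * (N + 1) - 1) * (1 - t) ^ (a - 1)
      * consTerm a (t * c 0) (fun i => t * c i.succ) ζ) (Ioc 0 1) := by
  refine IntegrableOn.congr_fun ?_ (fun t ht => (weight_mul_consTerm ht.1 _ c ζ).symm)
    measurableSet_Ioc
  exact ((intervalIntegrable_betaIntegrand (by positivity) ha).1).const_mul _

lemma integral_weight_mul_consTerm (ha : 0 < a) (c : Fin (N + 1) → ℝ) (ζ : Fin (N + 1) → ℕ) :
    ∫ t in Ioc 0 1, t ^ (a * (N + 1) - 1) * (1 - t) ^ (a - 1)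
      * consTerm a (t * c 0) (fun i => t * c i.succ) ζ = Gamma a * phiTerm a c ζ := by
  rw [setIntegral_congr_fun measurableSet_Ioc (fun t ht => weight_mul_consTerm ht.1 _ c ζ),
    integral_const_mul, ← intervalIntegral.integral_of_le zero_le_one,
    integral_rpow_mul_one_sub_rpow_eq_gammaRatio ha (by positivity), phiTerm_eq_mul_phiTerm_tail]
  ring

theorem integral_weight_mul_tsum_phiTerm (ha : 0 < a) (c : Fin (N + 1) → ℝ)
    (hc : ∀ i, |c i| < 1) :
    ∫ t in (0 : ℝ)..1, (1 - t * c 0) ^ (-a) * t ^ (a * (N + 1) - 1) * (1 - t) ^ (a - 1)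
        * ∑' η, phiTerm a (fun i => t * c i.succ) η
      = Gamma a * ∑' ζ, phiTerm a c ζ := by
  set F := fun ζ t => t ^ (a * (N + 1) - 1) * (1 - t) ^ (a - 1)
    * consTerm a (t * c 0) (fun i => t * c i.succ) ζ
  have hexpand : EqOn (fun t => (1 - t * c 0) ^ (-a) * t ^ (a * (N + 1) - 1) * (1 - t) ^ (a - 1)
      * ∑' η, phiTerm a (fun i => t * c i.succ) η) (fun t => ∑' ζ, F ζ t) (Ioc 0 1) := by
    intro t ht
    have htc (i : Fin (N + 1)) : |t * c i| < 1 := by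
      rw [abs_mul, abs_of_pos ht.1]
      exact (mul_le_of_le_one_left (abs_nonneg _) ht.2).trans_lt (hc i)
    simp only [F, tsum_mul_left, (hasSum_consTerm ha (htc 0) fun i => htc i.succ).tsum_eq]
    ring
  have hnorm (ζ : Fin (N + 1) → ℕ) : ∫ t in Ioc 0 1, ‖F ζ t‖ = Gamma a * ‖phiTerm a c ζ‖ := by
    rw [Real.norm_eq_abs, abs_phiTerm ha, ← integral_weight_mul_consTerm ha]
    refine setIntegral_congr_fun measurableSet_Ioc fun t ht => ?_
    have hw : 0 ≤ t ^ (a * (N + 1) - 1) * (1 - t) ^ (a - 1) :=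
      mul_nonneg (rpow_nonneg ht.1.le _) (rpow_nonneg (sub_nonneg.2 ht.2) _)
    simp only [F, Real.norm_eq_abs, abs_mul, abs_of_nonneg hw, abs_consTerm ha, abs_of_pos ht.1]
  rw [intervalIntegral.integral_of_le zero_le_one, setIntegral_congr_fun measurableSet_Ioc hexpand,
    ← integral_tsum_of_summable_integral_norm (integrableOn_weight_mul_consTerm ha c)
      (((summable_norm_phiTerm ha hc).mul_left (Gamma a)).congr fun ζ => (hnorm ζ).symm)]
  simp only [integral_weight_mul_consTerm ha c, tsum_mul_left]

end Recursion

/-- Recursion for `Φ`: for a system of size `N+1` (paper's `N ≥ 1`),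
`Φ_{N+1}(c_1,…,c_{N+1}) = (1/B(2s(N+1),2s)) ∫_0^1 (1−t c_1)^{−2s} t^{2s(N+1)−1} (1−t)^{2s−1}
Φ_N(t c_2,…,t c_{N+1}) dt`, where `B(a,b) = Γ(a)Γ(b)/Γ(a+b)`. -/
theorem PhiFun_recursion (s : ℝ) (hs : 0 < s) (N : ℕ) (c : Fin (N + 1) → ℝ)
    (hc : ∀ i, |c i| < 1) :
    PhiFun s c
      = (1 / (Real.Gamma (2 * s * ((N : ℝ) + 1)) * Real.Gamma (2 * s) /
            Real.Gamma (2 * s * ((N : ℝ) + 1) + 2 * s))) *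
        ∫ t in (0 : ℝ)..1,
          (1 - t * c 0) ^ (-(2 * s)) * t ^ (2 * s * ((N : ℝ) + 1) - 1) * (1 - t) ^ (2 * s - 1)
            * PhiFun s (fun i : Fin N => t * c i.succ) := by
  have ha : 0 < 2 * s := by positivity
  have hintegrand : (fun t : ℝ => (1 - t * c 0) ^ (-(2 * s)) * t ^ (2 * s * ((N : ℝ) + 1) - 1)
      * (1 - t) ^ (2 * s - 1) * PhiFun s (fun i : Fin N => t * c i.succ))
      = fun t => Gamma (2 * s * (N + 1)) / Gamma (2 * s)
        * ((1 - t * c 0) ^ (-(2 * s)) * t ^ (2 * s * (N + 1) - 1) * (1 - t) ^ (2 * s - 1)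
          * ∑' η, phiTerm (2 * s) (fun i : Fin N => t * c i.succ) η) := by
    funext t
    rw [PhiFun_eq_tsum_phiTerm]
    ring
  rw [hintegrand, intervalIntegral.integral_const_mul, integral_weight_mul_tsum_phiTerm ha c hc,
    PhiFun_eq_tsum_phiTerm, Nat.cast_succ, show 2 * s * ((N : ℝ) + 1 + 1)
      = 2 * s * (N + 1) + 2 * s by ring]
  have hp : 0 < 2 * s * (N + 1) := by positivity
  field_simp [(Gamma_pos_of_pos ha).ne', (Gamma_pos_of_pos hp).ne']
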